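/- arXiv:dg-ga/9710007 — 4 statements merged into one kernel-verified Lean document; each statement's English description precedes it below -/
import Mathlib

section
/- Let g be a Lie algebra and N : g → g a linear endomorphism with vanishing Nijenhuis torsion, i.e. N([NX,Y] + [X,NY] - N[X,Y]) = [NX,NY] for all X,Y. Then the deformed bracket [X,Y]_N = [NX,Y] + [X,NY] - N[X,Y] satisfies the Jacobi identity, so (g, [·,·]_N) is a Lie algebra. -/
/-- Deformed bracket `[X,Y]_N = [NX,Y] + [X,NY] - N[X,Y]`. -/
def deformedBracket {g : Type*} [LieRing g] [LieAlgebra ℝ g]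
    (N : g →ₗ[ℝ] g) (X Y : g) : g :=
  ⁅N X, Y⁆ + ⁅X, N Y⁆ - N ⁅X, Y⁆

/-- Cyclic form of the Jacobi identity. -/
lemma deformedBracket_jac_aux {g : Type*} [LieRing g] (a b c : g) :
    ⁅⁅a,b⁆,c⁆ + ⁅⁅b,c⁆,a⁆ + ⁅⁅c,a⁆,b⁆ = 0 := by
  rw [← lie_skew ⁅a,b⁆ c, ← lie_skew ⁅b,c⁆ a, ← lie_skew ⁅c,a⁆ b]
  have h := lie_jacobi a b c
  rw [show -⁅c,⁅a,b⁆⁆ + -⁅a,⁅b,c⁆⁆ + -⁅b,⁅c,a⁆⁆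
      = -(⁅a,⁅b,c⁆⁆ + ⁅b,⁅c,a⁆⁆ + ⁅c,⁅a,b⁆⁆) from by abel, h, neg_zero]

/-- Expansion of the double deformed bracket using vanishing Nijenhuis torsion. -/
lemma deformedBracket_key {g : Type*} [LieRing g] [LieAlgebra ℝ g] (N : g →ₗ[ℝ] g)
    (hN : ∀ X Y : g, N (deformedBracket N X Y) = ⁅N X, N Y⁆) (X Y Z : g) :
    deformedBracket N (deformedBracket N X Y) Z =
      ⁅⁅N X, N Y⁆, Z⁆ + ⁅⁅N X, Y⁆, N Z⁆ + ⁅⁅X, N Y⁆, N Z⁆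
      - N ⁅⁅N X, Y⁆, Z⁆ - N ⁅⁅X, N Y⁆, Z⁆ - N ⁅⁅X, Y⁆, N Z⁆
      + N (N ⁅⁅X, Y⁆, Z⁆) := by
  have h1 := hN X Y
  have h2 := hN ⁅X, Y⁆ Z
  simp only [deformedBracket] at h1 h2 ⊢
  simp only [add_lie, sub_lie, lie_add, lie_sub] at h2 ⊢
  rw [h1, ← h2]
  simp only [map_add, map_sub]
  abel

/-- If the Nijenhuis torsion of `N` vanishes, the deformed bracket satisfies the
Jacobi identity, so `(g, [·,·]_N)` is a Lie algebra. -/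
theorem deformedBracket_jacobi {g : Type*} [LieRing g] [LieAlgebra ℝ g]
    (N : g →ₗ[ℝ] g)
    (hN : ∀ X Y : g, N (deformedBracket N X Y) = ⁅N X, N Y⁆) :
    ∀ X Y Z : g,
      deformedBracket N (deformedBracket N X Y) Z +
      deformedBracket N (deformedBracket N Y Z) X +
      deformedBracket N (deformedBracket N Z X) Y = 0 := by
  intro X Y Z
  have j1 := deformedBracket_jac_aux (N X) (N Y) Z
  have j2 := deformedBracket_jac_aux (N Y) (N Z) X
  have j3 := deformedBracket_jac_aux (N Z) (N X) Y
  have j4 : N ⁅⁅N X, Y⁆, Z⁆ + N ⁅⁅Y, Z⁆, N X⁆ + N ⁅⁅Z, N X⁆, Y⁆ = 0 := by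
    rw [← map_add, ← map_add, deformedBracket_jac_aux, map_zero]
  have j5 : N ⁅⁅N Y, Z⁆, X⁆ + N ⁅⁅Z, X⁆, N Y⁆ + N ⁅⁅X, N Y⁆, Z⁆ = 0 := by
    rw [← map_add, ← map_add, deformedBracket_jac_aux, map_zero]
  have j6 : N ⁅⁅N Z, X⁆, Y⁆ + N ⁅⁅X, Y⁆, N Z⁆ + N ⁅⁅Y, N Z⁆, X⁆ = 0 := by
    rw [← map_add, ← map_add, deformedBracket_jac_aux, map_zero]
  have j7 : N (N ⁅⁅X, Y⁆, Z⁆) + N (N ⁅⁅Y, Z⁆, X⁆) + N (N ⁅⁅Z, X⁆, Y⁆) = 0 := by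
    rw [← map_add, ← map_add, ← map_add, ← map_add, deformedBracket_jac_aux,
      map_zero, map_zero]
  rw [deformedBracket_key N hN X Y Z, deformedBracket_key N hN Y Z X,
    deformedBracket_key N hN Z X Y]
  rw [show
      ⁅⁅N X, N Y⁆, Z⁆ + ⁅⁅N X, Y⁆, N Z⁆ + ⁅⁅X, N Y⁆, N Z⁆
        - N ⁅⁅N X, Y⁆, Z⁆ - N ⁅⁅X, N Y⁆, Z⁆ - N ⁅⁅X, Y⁆, N Z⁆ + N (N ⁅⁅X, Y⁆, Z⁆)
      + (⁅⁅N Y, N Z⁆, X⁆ + ⁅⁅N Y, Z⁆, N X⁆ + ⁅⁅Y, N Z⁆, N X⁆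
        - N ⁅⁅N Y, Z⁆, X⁆ - N ⁅⁅Y, N Z⁆, X⁆ - N ⁅⁅Y, Z⁆, N X⁆ + N (N ⁅⁅Y, Z⁆, X⁆))
      + (⁅⁅N Z, N X⁆, Y⁆ + ⁅⁅N Z, X⁆, N Y⁆ + ⁅⁅Z, N X⁆, N Y⁆
        - N ⁅⁅N Z, X⁆, Y⁆ - N ⁅⁅Z, N X⁆, Y⁆ - N ⁅⁅Z, X⁆, N Y⁆ + N (N ⁅⁅Z, X⁆, Y⁆))
      =
      (⁅⁅N X, N Y⁆, Z⁆ + ⁅⁅N Y, Z⁆, N X⁆ + ⁅⁅Z, N X⁆, N Y⁆)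
      + (⁅⁅N Y, N Z⁆, X⁆ + ⁅⁅N Z, X⁆, N Y⁆ + ⁅⁅X, N Y⁆, N Z⁆)
      + (⁅⁅N Z, N X⁆, Y⁆ + ⁅⁅N X, Y⁆, N Z⁆ + ⁅⁅Y, N Z⁆, N X⁆)
      - (N ⁅⁅N X, Y⁆, Z⁆ + N ⁅⁅Y, Z⁆, N X⁆ + N ⁅⁅Z, N X⁆, Y⁆)
      - (N ⁅⁅N Y, Z⁆, X⁆ + N ⁅⁅Z, X⁆, N Y⁆ + N ⁅⁅X, N Y⁆, Z⁆)
      - (N ⁅⁅N Z, X⁆, Y⁆ + N ⁅⁅X, Y⁆, N Z⁆ + N ⁅⁅Y, N Z⁆, X⁆)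
      + (N (N ⁅⁅X, Y⁆, Z⁆) + N (N ⁅⁅Y, Z⁆, X⁆) + N (N ⁅⁅Z, X⁆, Y⁆))
      from by abel, j1, j2, j3, j4, j5, j6, j7]
  simp
end

section
/- Let V be a vector space and consider bilinear skew-symmetric brackets on V. For a bracket B and linear map N : V → V, define the deformation B_N(X,Y) = B(NX,Y)+B(X,NY)-N(B(X,Y)). If B satisfies the Jacobi identity and N has vanishing Nijenhuis torsion with respect to B (i.e. N(B_N(X,Y)) = B(NX,NY)), and additionally B_{N²}(X,Y) := B(N²X,Y)+B(X,N²Y)-N²B(X,Y) also defines a bracket satisfying the derivation compatibility [B, B_{N²}] = 0 in the Nijenhuis-Richardson sense, then B_N satisfies the Jacobi identity. -/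
/-- Deformation of a bilinear bracket by a linear map:
`B_N(X,Y) = B(NX,Y) + B(X,NY) - N(B(X,Y))`. -/
def deformBil {V : Type*} [AddCommGroup V] [Module ℝ V]
    (B : V →ₗ[ℝ] V →ₗ[ℝ] V) (N : V →ₗ[ℝ] V) (X Y : V) : V :=
  B (N X) Y + B X (N Y) - N (B X Y)

/-- If `B` is skew-symmetric, satisfies the Jacobi identity, `N` has vanishing
Nijenhuis torsion w.r.t. `B`, and the Nijenhuis–Richardson compatibility
`[B, B_{N²}]_{N-R} = 0` holds (the cyclic sum of
`B(B_{N²}(X,Y),Z) + B_{N²}(B(X,Y),Z)` vanishes), then the deformed bracket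
`B_N` satisfies the Jacobi identity. -/
theorem deformBil_jacobi {V : Type*} [AddCommGroup V] [Module ℝ V]
    (B : V →ₗ[ℝ] V →ₗ[ℝ] V) (N : V →ₗ[ℝ] V)
    (hskew : ∀ X Y : V, B X Y = - B Y X)
    (hjac : ∀ X Y Z : V, B (B X Y) Z + B (B Y Z) X + B (B Z X) Y = 0)
    (htor : ∀ X Y : V, N (deformBil B N X Y) = B (N X) (N Y))
    (hcompat : ∀ X Y Z : V,
      (B (deformBil B (N ∘ₗ N) X Y) Z + deformBil B (N ∘ₗ N) (B X Y) Z) +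
      (B (deformBil B (N ∘ₗ N) Y Z) X + deformBil B (N ∘ₗ N) (B Y Z) X) +
      (B (deformBil B (N ∘ₗ N) Z X) Y + deformBil B (N ∘ₗ N) (B Z X) Y) = 0) :
    ∀ X Y Z : V,
      deformBil B N (deformBil B N X Y) Z +
      deformBil B N (deformBil B N Y Z) X +
      deformBil B N (deformBil B N Z X) Y = 0 := by
  have key : ∀ X Y Z : V, deformBil B N (deformBil B N X Y) Z =
      B (B (N X) (N Y)) Z + B (B (N X) Y) (N Z) + B (B X (N Y)) (N Z)
      - N (B (B (N X) Y) Z) - N (B (B X (N Y)) Z) - N (B (B X Y) (N Z))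
      + N (N (B (B X Y) Z)) := by
    intro X Y Z
    have t1 := htor X Y
    have t2 := htor (B X Y) Z
    simp only [deformBil] at t1 t2 ⊢
    rw [t1]
    simp only [map_add, map_sub, LinearMap.add_apply, LinearMap.sub_apply]
    rw [← t2]
    simp only [map_add, map_sub, LinearMap.add_apply, LinearMap.sub_apply]
    abel
  intro X Y Z
  have h1 := hjac (N X) (N Y) Z
  have h2 := hjac (N Y) (N Z) X
  have h3 := hjac (N Z) (N X) Y
  have g1 := congrArg N (hjac (N X) Y Z)
  have g2 := congrArg N (hjac X (N Y) Z)
  have g3 := congrArg N (hjac X Y (N Z))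
  have j := congrArg N (congrArg N (hjac X Y Z))
  simp only [map_add, map_zero] at g1 g2 g3 j
  rw [key X Y Z, key Y Z X, key Z X Y]
  have expand :
      (B (B (N X) (N Y)) Z + B (B (N X) Y) (N Z) + B (B X (N Y)) (N Z)
        - N (B (B (N X) Y) Z) - N (B (B X (N Y)) Z) - N (B (B X Y) (N Z))
        + N (N (B (B X Y) Z)))
      + (B (B (N Y) (N Z)) X + B (B (N Y) Z) (N X) + B (B Y (N Z)) (N X)
        - N (B (B (N Y) Z) X) - N (B (B Y (N Z)) X) - N (B (B Y Z) (N X))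
        + N (N (B (B Y Z) X)))
      + (B (B (N Z) (N X)) Y + B (B (N Z) X) (N Y) + B (B Z (N X)) (N Y)
        - N (B (B (N Z) X) Y) - N (B (B Z (N X)) Y) - N (B (B Z X) (N Y))
        + N (N (B (B Z X) Y)))
      = (B (B (N X) (N Y)) Z + B (B (N Y) Z) (N X) + B (B Z (N X)) (N Y))
        + (B (B (N Y) (N Z)) X + B (B (N Z) X) (N Y) + B (B X (N Y)) (N Z))
        + (B (B (N Z) (N X)) Y + B (B (N X) Y) (N Z) + B (B Y (N Z)) (N X))
        - (N (B (B (N X) Y) Z) + N (B (B Y Z) (N X)) + N (B (B Z (N X)) Y))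
        - (N (B (B X (N Y)) Z) + N (B (B (N Y) Z) X) + N (B (B Z X) (N Y)))
        - (N (B (B X Y) (N Z)) + N (B (B Y (N Z)) X) + N (B (B (N Z) X) Y))
        + (N (N (B (B X Y) Z)) + N (N (B (B Y Z) X)) + N (N (B (B Z X) Y))) := by
    abel
  rw [expand, h1, h2, h3, g1, g2, g3, j]
  simp
end

section
/- Let g be a Lie algebra, P ∈ Λ²g an r-matrix satisfying the classical Yang–Baxter equation [P,P] = 0. Then the bracket on g* given by [μ,ν]_P = ad*_{P̃μ} ν - ad*_{P̃ν} μ is a Lie bracket (satisfies the Jacobi identity), making g* a Lie algebra and P̃ : g* → g a Lie algebra homomorphism. -/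
open LieAlgebra

/-- Coadjoint action: `(ad*_X μ)(Y) = -μ [X,Y]`. -/
def coad {g : Type*} [LieRing g] [LieAlgebra ℝ g] (X : g) (μ : Module.Dual ℝ g) :
    Module.Dual ℝ g :=
  - (μ ∘ₗ (ad ℝ g X))

/-- The dual bracket `[μ,ν]_P = ad*_{P̃μ} ν - ad*_{P̃ν} μ`. -/
def dualBracket {g : Type*} [LieRing g] [LieAlgebra ℝ g]
    (Pt : Module.Dual ℝ g →ₗ[ℝ] g) (μ ν : Module.Dual ℝ g) : Module.Dual ℝ g :=
  coad (Pt μ) ν - coad (Pt ν) μ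

/-- If `P ∈ Λ²g` satisfies the classical Yang–Baxter equation `[P,P] = 0`
(expressed as `P̃` intertwining the brackets), then the dual bracket
`[μ,ν]_P = ad*_{P̃μ} ν - ad*_{P̃ν} μ` satisfies the Jacobi identity, and
`P̃ : g* → g` is a Lie algebra homomorphism. -/
theorem dualBracket_jacobi_of_yangBaxter {g : Type*} [LieRing g] [LieAlgebra ℝ g]
    [Module.Finite ℝ g]
    (Pt : Module.Dual ℝ g →ₗ[ℝ] g)
    (hskew : ∀ μ ν : Module.Dual ℝ g, μ (Pt ν) = - ν (Pt μ))
    (hYB : ∀ μ ν : Module.Dual ℝ g, Pt (dualBracket Pt μ ν) = ⁅Pt μ, Pt ν⁆) :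
    (∀ μ ν γ : Module.Dual ℝ g,
        dualBracket Pt (dualBracket Pt μ ν) γ +
        dualBracket Pt (dualBracket Pt ν γ) μ +
        dualBracket Pt (dualBracket Pt γ μ) ν = 0) ∧
    (∀ μ ν : Module.Dual ℝ g, Pt (dualBracket Pt μ ν) = ⁅Pt μ, Pt ν⁆) := by
  refine ⟨?_, hYB⟩
  intro μ ν γ
  have hYB' : ∀ μ ν : Module.Dual ℝ g,
      Pt (coad (Pt μ) ν - coad (Pt ν) μ) = ⁅Pt μ, Pt ν⁆ := hYB
  ext X
  simp only [dualBracket]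
  simp only [hYB']
  simp only [coad, LinearMap.add_apply, LinearMap.sub_apply, LinearMap.neg_apply,
    LinearMap.comp_apply, ad_apply, LinearMap.zero_apply, lie_lie, map_sub]
  abel
end

section
/- Let g be a Lie algebra and define the trilinear Jacobiator of a skew bilinear bracket B by J_B(X,Y,Z) = B(B(X,Y),Z) + B(B(Y,Z),X) + B(B(Z,X),Y). Let N : g → g be a linear map with deformed bracket B_N and associated tensor T_N. If T_N ≡ 0, then J_{B_N} ≡ 0, i.e. B_N satisfies the Jacobi identity. -/
/-- Nijenhuis torsion `T_N(X,Y) = N B_N(X,Y) - [NX,NY]`. -/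
def nijenhuisTorsion {g : Type*} [LieRing g] [LieAlgebra ℝ g]
    (N : g →ₗ[ℝ] g) (X Y : g) : g :=
  N (deformedBracket N X Y) - ⁅N X, N Y⁆

/-- Jacobiator of a bracket `B`:
`J_B(X,Y,Z) = B(B(X,Y),Z) + B(B(Y,Z),X) + B(B(Z,X),Y)`. -/
def jacobiator {g : Type*} (B : g → g → g) [AddCommGroup g] (X Y Z : g) : g :=
  B (B X Y) Z + B (B Y Z) X + B (B Z X) Y

lemma jac_aux {g : Type*} [LieRing g] (a b c : g) :
    ⁅⁅a, b⁆, c⁆ + ⁅⁅b, c⁆, a⁆ + ⁅⁅c, a⁆, b⁆ = 0 := by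
  have e : ∀ x y z : g, ⁅⁅x, y⁆, z⁆ = ⁅z, ⁅y, x⁆⁆ := by
    intro x y z
    rw [← lie_skew ⁅x, y⁆ z, ← lie_skew x y, lie_neg, neg_neg]
  rw [e a b c, e b c a, e c a b]
  linear_combination (norm := abel) lie_jacobi c b a

/-- If the Nijenhuis torsion of `N` vanishes identically, then the Jacobiator
of the deformed bracket `B_N` vanishes identically. -/
theorem jacobiator_deformedBracket_eq_zero {g : Type*} [LieRing g] [LieAlgebra ℝ g]
    (N : g →ₗ[ℝ] g)
    (htor : ∀ X Y : g, nijenhuisTorsion N X Y = 0) :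
    ∀ X Y Z : g, jacobiator (deformedBracket N) X Y Z = 0 := by
  have hN : ∀ A B : g, N ⁅N A, B⁆ + N ⁅A, N B⁆ - N (N ⁅A, B⁆) = ⁅N A, N B⁆ := by
    intro A B
    have h : N (deformedBracket N A B) - ⁅N A, N B⁆ = 0 := htor A B
    rw [sub_eq_zero] at h
    simpa [deformedBracket, map_add, map_sub] using h
  intro X Y Z
  have e1 : ∀ A B C : g,
      ⁅N ⁅N A, B⁆, C⁆ + ⁅N ⁅A, N B⁆, C⁆ - ⁅N (N ⁅A, B⁆), C⁆ = ⁅⁅N A, N B⁆, C⁆ := by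
    intro A B C
    rw [← add_lie, ← sub_lie, hN A B]
  have nj : ∀ A B C : g,
      N ⁅⁅N A, B⁆, C⁆ + N ⁅⁅B, C⁆, N A⁆ + N ⁅⁅C, N A⁆, B⁆ = 0 := by
    intro A B C
    rw [← map_add, ← map_add, jac_aux, map_zero]
  have nn : N (N ⁅⁅X, Y⁆, Z⁆) + N (N ⁅⁅Y, Z⁆, X⁆) + N (N ⁅⁅Z, X⁆, Y⁆) = 0 := by
    rw [← map_add, ← map_add, ← map_add, ← map_add, jac_aux, map_zero, map_zero]
  simp only [jacobiator, deformedBracket, map_add, map_sub, lie_add, add_lie, lie_sub,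
    sub_lie]
  linear_combination (norm := abel)
    e1 X Y Z + e1 Y Z X + e1 Z X Y
    - nj X Y Z - nj Y Z X - nj Z X Y
    + hN ⁅Y, Z⁆ X + hN ⁅Z, X⁆ Y + hN ⁅X, Y⁆ Z
    + nn
    + jac_aux (N X) (N Y) Z + jac_aux (N Y) (N Z) X + jac_aux (N Z) (N X) Y
end
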